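/- Let L : ℝ^{d₁} × ⋯ × ℝ^{d_M} → ℝ be differentiable, and for each m let g_m : ℝ^{p_m} → ℝ^{d_m} be differentiable. Fix w^t = (w₁^t, …, w_M^t) and define for each m the auxiliary loss ℓ_m(w_m) = (1/2)‖g_m(w_m) - (g_m(w_m^t) - ∂_m L(g₁(w₁^t), …, g_M(w_M^t)))‖², where ∂_m L is the partial gradient of L in its m-th argument. Then for every m, ∇ℓ_m evaluated at w_m^t equals the partial gradient with respect to w_m of (w₁,…,w_M) ↦ L(g₁(w₁),…,g_M(w_M)) evaluated at w^t. -/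

import Mathlib

/-!
At `x`, the half squared distance `½‖f w - (f x - v)‖²` has derivative `⟪v, f' ·⟫`, since
the residual `f x - (f x - v)` is `v`. With `v = ∇φ (f x)` this is the chain-rule derivative
`Dφ (f x) ∘ f'` of `φ ∘ f`. For layer `m`, take `f = g m` and for `φ` the loss `L` as a function
of its `m`-th argument alone, the other layers being frozen at `g j (wt j)`.
-/

open InnerProductSpace Function

section SingleLayer

variable {E F : Type*} [NormedAddCommGroup E] [InnerProductSpace ℝ E]
  [NormedAddCommGroup F] [InnerProductSpace ℝ F]

theorem HasFDerivAt.half_norm_sq_sub_sub {f : E → F} {f' : E →L[ℝ] F} {x : E}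
    (hf : HasFDerivAt f f' x) (v : F) :
    HasFDerivAt (fun w => (1 / 2 : ℝ) * ‖f w - (f x - v)‖ ^ 2) ((innerSL ℝ v).comp f') x := by
  refine (((hf.sub_const (f x - v)).norm_sq).const_mul (1 / 2 : ℝ)).congr_fderiv ?_
  ext y
  simp only [sub_sub_cancel, smul_apply, ContinuousLinearMap.comp_apply,
    innerSL_apply_apply, smul_eq_mul, nsmul_eq_mul]
  ring

theorem gradient_half_norm_sq_sub_sub_gradient [CompleteSpace E] [CompleteSpace F]
    {f : E → F} {φ : F → ℝ} {x : E} (hf : DifferentiableAt ℝ f x)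
    (hφ : DifferentiableAt ℝ φ (f x)) :
    gradient (fun w => (1 / 2 : ℝ) * ‖f w - (f x - gradient φ (f x))‖ ^ 2) x =
      gradient (φ ∘ f) x := by
  refine congrArg (toDual ℝ E).symm ?_
  rw [(hf.hasFDerivAt.half_norm_sq_sub_sub (gradient φ (f x))).fderiv, fderiv_comp x hφ hf]
  ext y
  simp only [gradient, ContinuousLinearMap.comp_apply, coe_innerSL_apply, toDual_symm_apply]

end SingleLayer

theorem Differentiable.comp_toLp_update {ι G : Type*} [Fintype ι] [DecidableEq ι]
    {E : ι → Type*} [∀ i, NormedAddCommGroup (E i)] [∀ i, NormedSpace ℝ (E i)]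
    [NormedAddCommGroup G] [NormedSpace ℝ G] {L : PiLp 2 E → G} (hL : Differentiable ℝ L)
    (x : ∀ i, E i) (i : ι) :
    Differentiable ℝ (fun u => L (WithLp.toLp 2 (update x i u))) := fun u =>
  hL.differentiableAt.comp u
    ((PiLp.hasFDerivAt_toLp 2 _).comp u (hasFDerivAt_update x u)).differentiableAt

theorem stmt_10 {M : ℕ} {d p : Fin M → ℕ}
    (L : PiLp 2 (fun m => EuclideanSpace ℝ (Fin (d m))) → ℝ)
    (g : ∀ m, EuclideanSpace ℝ (Fin (p m)) → EuclideanSpace ℝ (Fin (d m)))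
    (hL : Differentiable ℝ L) (hg : ∀ m, Differentiable ℝ (g m))
    (wt : ∀ m, EuclideanSpace ℝ (Fin (p m)))
    (ℓ : ∀ m, EuclideanSpace ℝ (Fin (p m)) → ℝ)
    (hℓ : ∀ m w, ℓ m w = (1/2) *
      ‖g m w - (g m (wt m) -
        gradient (fun u => L (WithLp.toLp 2 (Function.update (fun j => g j (wt j)) m u))) (g m (wt m)))‖ ^ 2) :
    ∀ m, gradient (ℓ m) (wt m) =
      gradient (fun u => L (WithLp.toLp 2 (fun j => g j (Function.update wt m u j)))) (wt m) := by
  intro m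
  rw [funext (hℓ m), gradient_half_norm_sq_sub_sub_gradient (hg m _)
    (hL.comp_toLp_update _ m).differentiableAt]
  simp only [comp_def, apply_update g wt m]
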